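/- arXiv:2311.11759 — 3 statements merged into one kernel-verified Lean document; each statement's English description precedes it below -/
import Mathlib

section
/- Let n, m be natural numbers, let Ã be a symmetric real n×n matrix such that I − Ã is positive semidefinite, let γ ∈ (0,1), and let S be a real n×m matrix. Define the graph-signal-denoising objective L_GSD(F) = tr((F − S)ᵀ(F − S)) + (1/(1−γ) − 1)·tr(Fᵀ(I − Ã)F) for real n×m matrices F. Then the matrix F* = (1−γ)·(I − γÃ)⁻¹·S satisfies L_GSD(F*) ≤ L_GSD(F) for every real n×m matrix F. -/
open Matrix

/-!
With `M = (1 - γ)⁻¹ (I - γÃ) = I + (γ / (1 - γ)) (I - Ã)` the objective is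
`L(F) = tr(Fᵀ M F) - 2 tr(Sᵀ F) + tr(Sᵀ S)`. The matrix `M` is positive definite, being a positive
multiple of `(1 - γ) I + γ (I - Ã)`, and `F* = M⁻¹ S`, so completing the square gives
`L(F) - L(F*) = tr((F - F*)ᵀ M (F - F*)) ≥ 0`.
-/

/-- The graph-signal-denoising objective
`L_GSD(F) = tr((F − S)ᵀ(F − S)) + (1/(1−γ) − 1)·tr(Fᵀ(I − Ã)F)`. -/
noncomputable def LGSD {n m : ℕ} (Atil : Matrix (Fin n) (Fin n) ℝ) (γ : ℝ)
    (S F : Matrix (Fin n) (Fin m) ℝ) : ℝ :=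
  ((F - S)ᵀ * (F - S)).trace + (1 / (1 - γ) - 1) * (Fᵀ * (1 - Atil) * F).trace

namespace Matrix

theorem posDef_one_sub_smul {n : Type*} [DecidableEq n] {A : Matrix n n ℝ}
    (hA : (1 - A).PosSemidef) {γ : ℝ} (hγ₀ : 0 ≤ γ) (hγ₁ : γ < 1) :
    (1 - γ • A).PosDef := by
  have h : 1 - γ • A = (1 - γ) • (1 : Matrix n n ℝ) + γ • (1 - A) := by
    rw [smul_sub, sub_smul, one_smul]; abel
  rw [h]
  exact (PosDef.one.smul (sub_pos.2 hγ₁)).add_posSemidef (hA.smul hγ₀)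

variable {n m : Type*} [Fintype n] [Fintype m]

theorem PosSemidef.trace_transpose_mul_mul_nonneg {M : Matrix n n ℝ} (hM : M.PosSemidef)
    (X : Matrix n m ℝ) : 0 ≤ (Xᵀ * M * X).trace :=
  (hM.conjTranspose_mul_mul_same X).trace_nonneg

theorem trace_transpose_sub_mul_mul_sub {M : Matrix n n ℝ} (hM : Mᵀ = M)
    {G S : Matrix n m ℝ} (hG : M * G = S) (X : Matrix n m ℝ) :
    ((X - G)ᵀ * M * (X - G)).trace
      = (Xᵀ * M * X).trace - 2 * (Sᵀ * X).trace + (Gᵀ * M * G).trace := by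
  have hGM : Gᵀ * M = Sᵀ := by rw [← hG, transpose_mul, hM]
  have hXS : (Xᵀ * S).trace = (Sᵀ * X).trace := by
    rw [← trace_transpose, transpose_mul, transpose_transpose]
  have hXMG : Xᵀ * M * G = Xᵀ * S := by rw [Matrix.mul_assoc, hG]
  simp only [transpose_sub, Matrix.sub_mul, Matrix.mul_sub, trace_sub, hXMG, hGM, hXS]
  ring

theorem PosSemidef.trace_quadratic_le_of_mul_eq {M : Matrix n n ℝ} (hM : M.PosSemidef)
    {G S : Matrix n m ℝ} (hG : M * G = S) (X : Matrix n m ℝ) :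
    (Gᵀ * M * G).trace - 2 * (Sᵀ * G).trace ≤ (Xᵀ * M * X).trace - 2 * (Sᵀ * X).trace := by
  have hMt : Mᵀ = M := by simpa using hM.isHermitian.eq
  have hXG := trace_transpose_sub_mul_mul_sub hMt hG X
  have hGG := trace_transpose_sub_mul_mul_sub hMt hG G
  simp only [sub_self, transpose_zero, Matrix.zero_mul, trace_zero] at hGG
  linarith [hM.trace_transpose_mul_mul_nonneg (X - G)]

end Matrix

theorem LGSD_eq_trace_quadratic {n m : ℕ} (Atil : Matrix (Fin n) (Fin n) ℝ) {γ : ℝ}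
    (hγ : γ ≠ 1) (S F : Matrix (Fin n) (Fin m) ℝ) :
    LGSD Atil γ S F = (Fᵀ * ((1 - γ)⁻¹ • (1 - γ • Atil)) * F).trace
      - 2 * (Sᵀ * F).trace + (Sᵀ * S).trace := by
  have h : (1 - γ)⁻¹ • (1 - γ • Atil) = 1 + (1 / (1 - γ) - 1) • (1 - Atil) := by
    have hc : (1 - γ)⁻¹ - 1 = (1 - γ)⁻¹ * γ := by
      field_simp [sub_ne_zero.2 hγ.symm]
      ring
    rw [one_div]
    linear_combination (norm := module) hc • Atil
  have hFS : (Fᵀ * S).trace = (Sᵀ * F).trace := by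
    rw [← trace_transpose, transpose_mul, transpose_transpose]
  rw [LGSD, h]
  simp only [transpose_sub, Matrix.sub_mul, Matrix.mul_sub, Matrix.mul_add, Matrix.add_mul,
    Matrix.mul_one, Matrix.mul_smul, Matrix.smul_mul, trace_sub, trace_add, trace_smul,
    smul_eq_mul, hFS]
  ring

theorem ppnp_solves_gsd_general (n m : ℕ) (Atil : Matrix (Fin n) (Fin n) ℝ)
    (hpsd : (1 - Atil).PosSemidef)
    (γ : ℝ) (hγ : γ ∈ Set.Ioo (0 : ℝ) 1)
    (S : Matrix (Fin n) (Fin m) ℝ) :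
    ∀ F : Matrix (Fin n) (Fin m) ℝ,
      LGSD Atil γ S ((1 - γ) • ((1 - γ • Atil)⁻¹ * S)) ≤ LGSD Atil γ S F := by
  intro F
  obtain ⟨hγ₀, hγ₁⟩ := hγ
  have hP := posDef_one_sub_smul hpsd hγ₀.le hγ₁
  have hM : ((1 - γ)⁻¹ • (1 - γ • Atil)).PosSemidef :=
    (hP.smul (inv_pos.2 (sub_pos.2 hγ₁))).posSemidef
  have hG : ((1 - γ)⁻¹ • (1 - γ • Atil)) * ((1 - γ) • ((1 - γ • Atil)⁻¹ * S)) = S := by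
    rw [Matrix.smul_mul, Matrix.mul_smul, smul_smul, inv_mul_cancel₀ (sub_pos.2 hγ₁).ne',
      one_smul, mul_nonsing_inv_cancel_left _ S ((isUnit_iff_isUnit_det _).1 hP.isUnit)]
  rw [LGSD_eq_trace_quadratic Atil hγ₁.ne, LGSD_eq_trace_quadratic Atil hγ₁.ne]
  linarith [hM.trace_quadratic_le_of_mul_eq hG F]

/-- The PPNP propagation `F* = (1−γ)(I − γÃ)⁻¹ S` minimizes the
graph-signal-denoising objective. -/
theorem ppnp_solves_gsd (n m : ℕ) (Atil : Matrix (Fin n) (Fin n) ℝ)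
    (hsym : Atil.IsSymm) (hpsd : (1 - Atil).PosSemidef)
    (γ : ℝ) (hγ : γ ∈ Set.Ioo (0 : ℝ) 1)
    (S : Matrix (Fin n) (Fin m) ℝ) :
    ∀ F : Matrix (Fin n) (Fin m) ℝ,
      LGSD Atil γ S ((1 - γ) • ((1 - γ • Atil)⁻¹ * S)) ≤ LGSD Atil γ S F :=
  ppnp_solves_gsd_general n m Atil hpsd γ hγ S
end

section
/- Let G be a finite simple graph that is d-regular (d ≥ 1) on vertex set V, with adjacency matrix A (A[u,v] = 1 if u and v are adjacent, 0 otherwise). Fix an integer k ≥ 2, a labeling y : V → {0,…,k−1}, and h ∈ [0,1] such that every vertex v has exactly h·d neighbors u with y(u) = y(v), and for each class c ≠ y(v) exactly (1−h)·d/(k−1) neighbors u with y(u) = c. Let p ∈ [0,1], γ ∈ (0,1], Ã = (1/d)·A, and let Pᵗ be the matrix with Pᵗ[u,c] = p if c = y(u) and Pᵗ[u,c] = (1−p)/(k−1) otherwise. Then for all v ∈ V and classes c: ((γÃ + (1−γ)I)Pᵗ)[v,c] = β if c = y(v) and ((γÃ + (1−γ)I)Pᵗ)[v,c] = β′ if c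 ≠ y(v), where β = (1−γ)p + γhp + γ(1−h)(1−p)/(k−1) and β′ = (1−γ)(1−p)/(k−1) + γh(1−p)/(k−1) + γ(1−h)p/(k−1) + γ(1−h)(k−2)(1−p)/(k−1)². -/
open Matrix

/-- One-step propagation `(γÃ + (1−γ)I)Pᵗ` of teacher soft labels on a `d`-regular
graph with homophily `h`, where `Ã = (1/d)·A` and `Pᵗ` puts probability `p` on the
true class and `(1−p)/(k−1)` on every other class: the entry at the true class is
`β = (1−γ)p + γhp + γ(1−h)(1−p)/(k−1)` and every other entry is
`β′ = (1−γ)(1−p)/(k−1) + γh(1−p)/(k−1) + γ(1−h)p/(k−1) + γ(1−h)(k−2)(1−p)/(k−1)²`. -/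
theorem soft_label_prop_one_step {V : Type*} [Fintype V] [DecidableEq V]
    (G : SimpleGraph V) [DecidableRel G.Adj] (d : ℕ) (hd : 1 ≤ d)
    (hreg : G.IsRegularOfDegree d)
    (k : ℕ) (hk : 2 ≤ k) (y : V → Fin k) (h : ℝ) (hh : h ∈ Set.Icc (0 : ℝ) 1)
    (hsame : ∀ v : V,
      (((G.neighborFinset v).filter fun u => y u = y v).card : ℝ) = h * d)
    (hdiff : ∀ v : V, ∀ c : Fin k, c ≠ y v →
      (((G.neighborFinset v).filter fun u => y u = c).card : ℝ) = (1 - h) * d / (k - 1))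
    (p : ℝ) (hp : p ∈ Set.Icc (0 : ℝ) 1)
    (Pt : Matrix V (Fin k) ℝ)
    (hPt : ∀ u c, Pt u c = if c = y u then p else (1 - p) / (k - 1))
    (γ : ℝ) (hγ : γ ∈ Set.Ioc (0 : ℝ) 1)
    (Atil : Matrix V V ℝ) (hAtil : Atil = (1 / (d : ℝ)) • G.adjMatrix ℝ) :
    ∀ (v : V) (c : Fin k),
      (((γ • Atil + (1 - γ) • 1) * Pt : Matrix V (Fin k) ℝ)) v c =
        if c = y v then
          (1 - γ) * p + γ * h * p + γ * (1 - h) * (1 - p) / (k - 1)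
        else
          (1 - γ) * (1 - p) / (k - 1) + γ * h * (1 - p) / (k - 1)
            + γ * (1 - h) * p / (k - 1)
            + γ * (1 - h) * (k - 2) * (1 - p) / (k - 1) ^ 2 := by
  intro v c
  have hd0 : (d : ℝ) ≠ 0 := by positivity
  have hk1 : (k : ℝ) - 1 ≠ 0 := by
    have : (2 : ℝ) ≤ (k : ℝ) := by exact_mod_cast hk
    linarith
  set S := G.neighborFinset v with hS
  have hcard : (S.card : ℝ) = d := by
    rw [hS, G.card_neighborFinset_eq_degree, hreg v]
  have hkey : (((γ • Atil + (1 - γ) • 1) * Pt : Matrix V (Fin k) ℝ)) v c =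
      γ * ((1 / (d : ℝ)) * ∑ u ∈ S, Pt u c) + (1 - γ) * Pt v c := by
    subst hAtil
    rw [Matrix.add_mul, Matrix.smul_mul, Matrix.smul_mul, Matrix.smul_mul, Matrix.one_mul]
    simp only [Matrix.add_apply, Matrix.smul_apply, smul_eq_mul,
      SimpleGraph.adjMatrix_mul_apply]
    have hmul : (SimpleGraph.adjMatrix ℝ G * Pt) v c = ∑ u ∈ S, Pt u c := by
      simp [Matrix.mul_apply, SimpleGraph.neighborFinset_eq_filter, Finset.sum_filter, hS]
    rw [hmul]
  have h1 : ∀ u ∈ S.filter (fun u => y u = c), Pt u c = p := by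
    intro u hu
    rw [hPt, if_pos]
    exact ((Finset.mem_filter.mp hu).2).symm
  have h2 : ∀ u ∈ S.filter (fun u => ¬ y u = c), Pt u c = (1 - p) / ((k : ℝ) - 1) := by
    intro u hu
    rw [hPt, if_neg]
    exact fun hc => (Finset.mem_filter.mp hu).2 hc.symm
  have hsum : ∑ u ∈ S, Pt u c =
      ((S.filter (fun u => y u = c)).card : ℝ) * p +
      ((S.filter (fun u => ¬ y u = c)).card : ℝ) * ((1 - p) / ((k : ℝ) - 1)) := by
    rw [← Finset.sum_filter_add_sum_filter_not S (fun u => y u = c),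
      Finset.sum_congr rfl h1, Finset.sum_congr rfl h2,
      Finset.sum_const, Finset.sum_const, nsmul_eq_mul, nsmul_eq_mul]
  have hcompl : ((S.filter (fun u => ¬ y u = c)).card : ℝ) =
      (d : ℝ) - ((S.filter (fun u => y u = c)).card : ℝ) := by
    have := Finset.card_filter_add_card_filter_not (s := S)
      (p := fun u => y u = c)
    have h' : ((S.filter (fun u => y u = c)).card : ℝ) +
        ((S.filter (fun u => ¬ y u = c)).card : ℝ) = (S.card : ℝ) := by
      exact_mod_cast this
    rw [hcard] at h'
    linarith
  rw [hkey, hsum, hcompl, hPt v c]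
  by_cases hc : c = y v
  · rw [if_pos hc, if_pos hc]
    have hf : ((S.filter (fun u => y u = c)).card : ℝ) = h * d := by
      rw [hc]; exact hsame v
    rw [hf]
    field_simp
    ring
  · rw [if_neg hc, if_neg hc]
    have hf : ((S.filter (fun u => y u = c)).card : ℝ) = (1 - h) * d / ((k : ℝ) - 1) := by
      exact hdiff v c hc
    rw [hf]
    field_simp
    ring
end

section
/- Let k ≥ 2 be an integer, γ ∈ (0,1), and h, p, q ∈ [0,1]. Define β_q = (1−γ)q + γhp + γ(1−h)(1−p)/(k−1), β′_q = (1−γ)(1−q)/(k−1) + γh(1−p)/(k−1) + γ(1−h)p/(k−1) + γ(1−h)(k−2)(1−p)/(k−1)², and C = (1 + 1/k)hp − (h+p)/k. If q > 1/k − (γ/(1−γ))·C, then β_q > β′_q. -/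
/-- Corollary (ε = 0 case): if `q > 1/k − (γ/(1−γ))·C` with
`C = (1 + 1/k)hp − (h+p)/k`, then the exact post-propagation probability of the
true class `β_q` exceeds that of each incorrect class `β′_q`. -/
theorem self_correction_no_error (k : ℕ) (hk : 2 ≤ k)
    (γ : ℝ) (hγ : γ ∈ Set.Ioo (0 : ℝ) 1)
    (h p q : ℝ) (hh : h ∈ Set.Icc (0 : ℝ) 1) (hp : p ∈ Set.Icc (0 : ℝ) 1)
    (hq : q ∈ Set.Icc (0 : ℝ) 1)
    (hcond : q > 1 / (k : ℝ)
      - (γ / (1 - γ)) * ((1 + 1 / (k : ℝ)) * h * p - (h + p) / k)) :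
    (1 - γ) * q + γ * h * p + γ * (1 - h) * (1 - p) / ((k : ℝ) - 1) >
      (1 - γ) * (1 - q) / ((k : ℝ) - 1) + γ * h * (1 - p) / ((k : ℝ) - 1)
        + γ * (1 - h) * p / ((k : ℝ) - 1)
        + γ * (1 - h) * ((k : ℝ) - 2) * (1 - p) / ((k : ℝ) - 1) ^ 2 := by
  obtain ⟨hγ0, hγ1⟩ := hγ
  have hk2 : (2 : ℝ) ≤ (k : ℝ) := by exact_mod_cast hk
  have hkpos : (0 : ℝ) < (k : ℝ) := by linarith
  have hkm1 : (0 : ℝ) < (k : ℝ) - 1 := by linarith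
  have h1γ : (0 : ℝ) < 1 - γ := by linarith
  -- clear denominators in hcond
  have hc : q * ((1 - γ) * (k : ℝ)) >
      (1 - γ) - γ * (((k : ℝ) + 1) * h * p - (h + p)) := by
    have := mul_lt_mul_of_pos_right hcond (by positivity : (0:ℝ) < (1 - γ) * (k : ℝ))
    have hk0 : (k : ℝ) ≠ 0 := ne_of_gt hkpos
    have hγ0' : (1 : ℝ) - γ ≠ 0 := ne_of_gt h1γ
    field_simp at this
    nlinarith [this]
  rw [gt_iff_lt, ← sub_pos]
  have key : ((1 - γ) * q + γ * h * p + γ * (1 - h) * (1 - p) / ((k : ℝ) - 1)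
      - ((1 - γ) * (1 - q) / ((k : ℝ) - 1) + γ * h * (1 - p) / ((k : ℝ) - 1)
        + γ * (1 - h) * p / ((k : ℝ) - 1)
        + γ * (1 - h) * ((k : ℝ) - 2) * (1 - p) / ((k : ℝ) - 1) ^ 2))
        * ((k : ℝ) - 1) ^ 2 > 0 := by
    have e : ((1 - γ) * q + γ * h * p + γ * (1 - h) * (1 - p) / ((k : ℝ) - 1)
      - ((1 - γ) * (1 - q) / ((k : ℝ) - 1) + γ * h * (1 - p) / ((k : ℝ) - 1)
        + γ * (1 - h) * p / ((k : ℝ) - 1)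
        + γ * (1 - h) * ((k : ℝ) - 2) * (1 - p) / ((k : ℝ) - 1) ^ 2))
        * ((k : ℝ) - 1) ^ 2
      = (1 - γ) * q * ((k:ℝ)-1)^2 + γ * h * p * ((k:ℝ)-1)^2
        + γ * (1 - h) * (1 - p) * ((k:ℝ)-1)
        - (1 - γ) * (1 - q) * ((k:ℝ)-1) - γ * h * (1 - p) * ((k:ℝ)-1)
        - γ * (1 - h) * p * ((k:ℝ)-1)
        - γ * (1 - h) * ((k : ℝ) - 2) * (1 - p) := by
      field_simp
      ring
    rw [e]
    nlinarith [hc, mul_nonneg hh.1 hp.1, mul_nonneg (sub_nonneg.2 hh.2) (sub_nonneg.2 hp.2),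
      mul_nonneg hh.1 (sub_nonneg.2 hp.2), mul_nonneg (sub_nonneg.2 hh.2) hp.1,
      mul_pos h1γ hkm1, sq_nonneg ((k:ℝ)-1), mul_nonneg (mul_nonneg hh.1 hp.1) (le_of_lt hkm1)]
  nlinarith [key, sq_nonneg ((k:ℝ)-1), mul_pos hkm1 hkm1]
end
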